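/- Let $k_0 \geq 0$ and let $\Psi : [k_0,\infty) \to [0,\infty)$ be nonincreasing. If there exist constants $c, a > 0$ and $b > 1$ such that $\Psi(h) \leq \frac{c}{(h-k)^a}[\Psi(k)]^b$ for all $h > k > k_0$, then $\Psi(k_0 + d) = 0$, where $d^a = c\, 2^{ab/(b-1)} [\Psi(k_0)]^{b-1}$. -/

import Mathlib

/-!
Along the levels `kₙ = k₀ + d (1 - 2⁻ⁿ)` the hypothesis with `h - k = d / 2ⁿ⁺¹` gives, by
induction, `Ψ kₙ ≤ Ψ k₀ · rⁿ` with `r = 2 ^ (-a / (b - 1)) < 1`: the value of `d ^ a` is exactly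
what makes this bound reproduce itself at `n + 1`. As `kₙ ≤ k₀ + d` and `Ψ` is nonincreasing,
`0 ≤ Ψ (k₀ + d) ≤ Ψ k₀ · rⁿ → 0`.
-/

open Filter Topology Set

namespace Stampacchia

noncomputable def level (k₀ d : ℝ) (n : ℕ) : ℝ := k₀ + d - d / 2 ^ n

section Levels

variable {k₀ d : ℝ}

@[simp] lemma level_zero : level k₀ d 0 = k₀ := by simp [level]

lemma level_succ_sub (n : ℕ) : level k₀ d (n + 1) - level k₀ d n = d / 2 ^ (n + 1) := by
  simp only [level, pow_succ]
  field_simp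
  ring

lemma le_level (hd : 0 ≤ d) (n : ℕ) : k₀ ≤ level k₀ d n := by
  have : d / 2 ^ n ≤ d := div_le_self hd (one_le_pow₀ one_le_two)
  simp only [level]
  linarith

lemma level_le (hd : 0 ≤ d) (n : ℕ) : level k₀ d n ≤ k₀ + d := by
  have : 0 ≤ d / 2 ^ n := by positivity
  simp only [level]
  linarith

lemma level_lt_succ (hd : 0 < d) (n : ℕ) : level k₀ d n < level k₀ d (n + 1) := by
  have := level_succ_sub (k₀ := k₀) (d := d) n
  have : 0 < d / 2 ^ (n + 1) := by positivity
  linarith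

end Levels

section DecayRatio

noncomputable def decayRatio (a b : ℝ) : ℝ := 2 ^ (-(a / (b - 1)))

variable {a b : ℝ}

lemma decayRatio_pos (a b : ℝ) : 0 < decayRatio a b := Real.rpow_pos_of_pos two_pos _

lemma decayRatio_lt_one (ha : 0 < a) (hb : 1 < b) : decayRatio a b < 1 :=
  Real.rpow_lt_one_of_one_lt_of_neg one_lt_two (neg_neg_of_pos (div_pos ha (sub_pos.2 hb)))

lemma decayRatio_rpow (hb : 1 < b) : decayRatio a b ^ b = decayRatio a b / 2 ^ a := by
  have : b - 1 ≠ 0 := (sub_pos.2 hb).ne'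
  rw [decayRatio, ← Real.rpow_mul zero_le_two, ← Real.rpow_sub two_pos]
  congr 1
  field_simp
  ring

lemma two_rpow_eq_div_decayRatio (hb : 1 < b) :
    (2 : ℝ) ^ (a * b / (b - 1)) = 2 ^ a / decayRatio a b := by
  have : b - 1 ≠ 0 := (sub_pos.2 hb).ne'
  rw [decayRatio, ← Real.rpow_sub two_pos]
  congr 1
  field_simp
  ring

lemma step_eq {c d P : ℝ} (hc : 0 < c) (hb : 1 < b) (hP : 0 < P) (hd : 0 < d)
    (hda : d ^ a = c * 2 ^ (a * b / (b - 1)) * P ^ (b - 1)) (n : ℕ) :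
    c / (d / 2 ^ (n + 1)) ^ a * (P * decayRatio a b ^ n) ^ b = P * decayRatio a b ^ (n + 1) := by
  have hr := decayRatio_pos a b
  have hPb : P ^ b = P * P ^ (b - 1) := by
    rw [Real.rpow_sub_one hP.ne']
    field_simp
  rw [Real.div_rpow hd.le (by positivity), ← Real.rpow_pow_comm zero_le_two,
    Real.mul_rpow hP.le (by positivity), ← Real.rpow_pow_comm hr.le, decayRatio_rpow hb, hPb, hda,
    two_rpow_eq_div_decayRatio hb, div_pow]
  have : 0 < P ^ (b - 1) := Real.rpow_pos_of_pos hP _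
  have : (0 : ℝ) < 2 ^ a := Real.rpow_pos_of_pos two_pos _
  field_simp
  ring

end DecayRatio

section Iteration

variable {Ψ : ℝ → ℝ} {k₀ c a b d : ℝ}

/-- The hypothesis is assumed only for `k > k₀`; the case `k = k₀` follows by letting `k ↓ k₀`. -/
lemma le_div_sub_rpow_mul_rpow (hΨnonneg : ∀ k, k₀ ≤ k → 0 ≤ Ψ k)
    (hΨmono : AntitoneOn Ψ (Ici k₀)) (hc : 0 ≤ c) (hb : 0 ≤ b)
    (hiter : ∀ h k : ℝ, k₀ < k → k < h → Ψ h ≤ c / (h - k) ^ a * Ψ k ^ b)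
    {h k : ℝ} (hk : k₀ ≤ k) (hkh : k < h) : Ψ h ≤ c / (h - k) ^ a * Ψ k ^ b := by
  rcases hk.lt_or_eq with hk | rfl
  · exact hiter h k hk hkh
  have hbound : ∀ᶠ k in 𝓝[>] k₀, Ψ h ≤ c / (h - k) ^ a * Ψ k₀ ^ b := by
    filter_upwards [Ioo_mem_nhdsGT hkh] with k ⟨hk₀k, hkh⟩
    calc Ψ h ≤ c / (h - k) ^ a * Ψ k ^ b := hiter h k hk₀k hkh
      _ ≤ c / (h - k) ^ a * Ψ k₀ ^ b := by
        gcongr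
        · exact hΨnonneg k hk₀k.le
        · exact hΨmono self_mem_Ici hk₀k.le hk₀k.le
  have hcont : ContinuousAt (fun k => c / (h - k) ^ a * Ψ k₀ ^ b) k₀ := by
    have : (h - k₀) ^ a ≠ 0 := (Real.rpow_pos_of_pos (sub_pos.2 hkh) a).ne'
    fun_prop (disch := first | exact this | exact Or.inl (sub_pos.2 hkh).ne')
  exact ge_of_tendsto (hcont.tendsto.mono_left nhdsWithin_le_nhds) hbound

lemma apply_level_le_mul_decayRatio_pow (hΨnonneg : ∀ k, k₀ ≤ k → 0 ≤ Ψ k)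
    (hΨmono : AntitoneOn Ψ (Ici k₀)) (hc : 0 < c) (hb : 1 < b)
    (hiter : ∀ h k : ℝ, k₀ < k → k < h → Ψ h ≤ c / (h - k) ^ a * Ψ k ^ b)
    (hP : 0 < Ψ k₀) (hd : 0 < d) (hda : d ^ a = c * 2 ^ (a * b / (b - 1)) * Ψ k₀ ^ (b - 1))
    (n : ℕ) : Ψ (level k₀ d n) ≤ Ψ k₀ * decayRatio a b ^ n := by
  induction n with
  | zero => simp
  | succ n ih =>
    calc Ψ (level k₀ d (n + 1))
        ≤ c / (level k₀ d (n + 1) - level k₀ d n) ^ a * Ψ (level k₀ d n) ^ b :=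
          le_div_sub_rpow_mul_rpow hΨnonneg hΨmono hc.le (by linarith) hiter (le_level hd.le n)
            (level_lt_succ hd n)
      _ ≤ c / (d / 2 ^ (n + 1)) ^ a * (Ψ k₀ * decayRatio a b ^ n) ^ b := by
          rw [level_succ_sub]
          gcongr
          exact hΨnonneg _ (le_level hd.le n)
      _ = Ψ k₀ * decayRatio a b ^ (n + 1) := step_eq hc hb hP hd hda n

end Iteration

end Stampacchia

open Stampacchia in
theorem stampacchia_iteration_general
    (k₀ : ℝ) (Ψ : ℝ → ℝ)
    (hΨnonneg : ∀ k, k₀ ≤ k → 0 ≤ Ψ k)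
    (hΨmono : AntitoneOn Ψ (Set.Ici k₀))
    (c a b : ℝ) (hc : 0 < c) (ha : 0 < a) (hb : 1 < b)
    (hiter : ∀ h k : ℝ, k₀ < k → k < h → Ψ h ≤ c / (h - k) ^ a * (Ψ k) ^ b)
    (d : ℝ) (hd : 0 ≤ d)
    (hda : d ^ a = c * 2 ^ (a * b / (b - 1)) * (Ψ k₀) ^ (b - 1)) :
    Ψ (k₀ + d) = 0 := by
  have hkd : k₀ ≤ k₀ + d := le_add_of_nonneg_right hd
  have hnonneg : 0 ≤ Ψ (k₀ + d) := hΨnonneg _ hkd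
  obtain hP | hP := (hΨnonneg k₀ le_rfl).eq_or_lt'
  · have : Ψ (k₀ + d) ≤ Ψ k₀ := hΨmono self_mem_Ici hkd hkd
    linarith
  have hd₀ : 0 < d := by
    refine hd.lt_of_ne' fun hd₀ => ?_
    have : 0 < d ^ a := by rw [hda]; positivity
    rw [hd₀, Real.zero_rpow ha.ne'] at this
    exact this.false
  have hbound (n : ℕ) : Ψ (k₀ + d) ≤ Ψ k₀ * decayRatio a b ^ n :=
    (hΨmono (le_level hd n) hkd (level_le hd n)).trans
      (apply_level_le_mul_decayRatio_pow hΨnonneg hΨmono hc hb hiter hP hd₀ hda n)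
  have hlim : Tendsto (fun n : ℕ => Ψ k₀ * decayRatio a b ^ n) atTop (𝓝 0) := by
    simpa using (tendsto_pow_atTop_nhds_zero_of_lt_one (decayRatio_pos a b).le
      (decayRatio_lt_one ha hb)).const_mul (Ψ k₀)
  exact le_antisymm (ge_of_tendsto' hlim hbound) hnonneg

/-- Stampacchia's iteration lemma. -/
theorem stampacchia_iteration
    (k₀ : ℝ) (hk₀ : 0 ≤ k₀) (Ψ : ℝ → ℝ)
    (hΨnonneg : ∀ k, k₀ ≤ k → 0 ≤ Ψ k)
    (hΨmono : AntitoneOn Ψ (Set.Ici k₀))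
    (c a b : ℝ) (hc : 0 < c) (ha : 0 < a) (hb : 1 < b)
    (hiter : ∀ h k : ℝ, k₀ < k → k < h → Ψ h ≤ c / (h - k) ^ a * (Ψ k) ^ b)
    (d : ℝ) (hd : 0 ≤ d)
    (hda : d ^ a = c * 2 ^ (a * b / (b - 1)) * (Ψ k₀) ^ (b - 1)) :
    Ψ (k₀ + d) = 0 :=
  stampacchia_iteration_general k₀ Ψ hΨnonneg hΨmono c a b hc ha hb hiter d hd hda
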